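/- Let G be a finite simple graph with no isolated vertices, let n ≥ 1, t ∈ {n, n−1}, and let k be a positive integer such that S(G)_k and S(G)_t^n have the same number of vertices (i.e., p + kq = (n+1)p + (t+1)q). Then ε_R(S(G)_k) = ε_R(S(G)_t^n); that is, S(G)_k and S(G)_t^n are Randić equienergetic. -/

import Mathlib

open Matrix

noncomputable section

/-- The multiplicity of `μ` as an eigenvalue of a real matrix `M`:
the dimension of the kernel of `M - μ·Id`. -/
def eigMult {n : Type} [Fintype n] [DecidableEq n] (M : Matrix n n ℝ) (μ : ℝ) : ℕ :=
  Module.finrank ℝ (LinearMap.ker (Matrix.toLin' (M - μ • (1 : Matrix n n ℝ))))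

/-- The energy of a real symmetric matrix: the sum of the absolute values of its
eigenvalues, counted with multiplicity. -/
def matEnergy {n : Type} [Fintype n] [DecidableEq n] (M : Matrix n n ℝ) : ℝ :=
  if h : M.IsHermitian then ∑ i, |h.eigenvalues i| else 0

/-- The incidence matrix of a graph, rows indexed by vertices, columns by edges. -/
def incid {V : Type} [DecidableEq V] (G : SimpleGraph V) : Matrix V G.edgeSet ℝ :=
  fun v e => if v ∈ (e : Sym2 V) then 1 else 0

/-- Adjacency matrix of the subdivision graph `S(G)`. -/
def AS {V : Type} [DecidableEq V] (G : SimpleGraph V) :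
    Matrix (V ⊕ G.edgeSet) (V ⊕ G.edgeSet) ℝ :=
  Matrix.fromBlocks 0 (incid G) (incid G)ᵀ 0

/-- Adjacency matrix of `S(G)_k`. -/
def ASk {V : Type} [DecidableEq V] (G : SimpleGraph V) (k : ℕ) :
    Matrix (V ⊕ (Fin k × G.edgeSet)) (V ⊕ (Fin k × G.edgeSet)) ℝ :=
  fun x y => match x, y with
    | Sum.inl v, Sum.inr (_, e) => if v ∈ (e : Sym2 V) then 1 else 0
    | Sum.inr (_, e), Sum.inl v => if v ∈ (e : Sym2 V) then 1 else 0
    | _, _ => 0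

/-- Adjacency matrix of `S(G)_t^n`. -/
def AStn {V : Type} [DecidableEq V] (G : SimpleGraph V) (n t : ℕ) :
    Matrix ((Fin (n + 1) × V) ⊕ (Fin (t + 1) × G.edgeSet))
           ((Fin (n + 1) × V) ⊕ (Fin (t + 1) × G.edgeSet)) ℝ :=
  fun x y => match x, y with
    | Sum.inl (_, v), Sum.inr (_, e) => if v ∈ (e : Sym2 V) then 1 else 0
    | Sum.inr (_, e), Sum.inl (_, v) => if v ∈ (e : Sym2 V) then 1 else 0
    | _, _ => 0

/-- The subdivision graph `S(G)` as a simple graph. -/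
def SGGraph {V : Type} (G : SimpleGraph V) : SimpleGraph (V ⊕ G.edgeSet) where
  Adj x y :=
    (∃ (v : V) (e : G.edgeSet), x = Sum.inl v ∧ y = Sum.inr e ∧ v ∈ (e : Sym2 V)) ∨
    (∃ (v : V) (e : G.edgeSet), x = Sum.inr e ∧ y = Sum.inl v ∧ v ∈ (e : Sym2 V))
  symm := ⟨by
    rintro x y (⟨v, e, rfl, rfl, h⟩ | ⟨v, e, rfl, rfl, h⟩)
    · exact Or.inr ⟨v, e, rfl, rfl, h⟩
    · exact Or.inl ⟨v, e, rfl, rfl, h⟩⟩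
  loopless := ⟨by
    rintro x (⟨v, e, h1, h2, _⟩ | ⟨v, e, h1, h2, _⟩) <;> subst h1 <;> simp_all⟩

/-- The graph `S(G)_k`. -/
def SGkGraph {V : Type} (G : SimpleGraph V) (k : ℕ) :
    SimpleGraph (V ⊕ (Fin k × G.edgeSet)) where
  Adj x y :=
    (∃ (v : V) (ie : Fin k × G.edgeSet),
        x = Sum.inl v ∧ y = Sum.inr ie ∧ v ∈ (ie.2 : Sym2 V)) ∨
    (∃ (v : V) (ie : Fin k × G.edgeSet),
        x = Sum.inr ie ∧ y = Sum.inl v ∧ v ∈ (ie.2 : Sym2 V))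
  symm := ⟨by
    rintro x y (⟨v, ie, rfl, rfl, h⟩ | ⟨v, ie, rfl, rfl, h⟩)
    · exact Or.inr ⟨v, ie, rfl, rfl, h⟩
    · exact Or.inl ⟨v, ie, rfl, rfl, h⟩⟩
  loopless := ⟨by
    rintro x (⟨v, ie, h1, h2, _⟩ | ⟨v, ie, h1, h2, _⟩) <;> subst h1 <;> simp_all⟩

/-- The graph `S(G)_t^n`. -/
def SGtnGraph {V : Type} (G : SimpleGraph V) (n t : ℕ) :
    SimpleGraph ((Fin (n + 1) × V) ⊕ (Fin (t + 1) × G.edgeSet)) where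
  Adj x y :=
    (∃ (iv : Fin (n + 1) × V) (je : Fin (t + 1) × G.edgeSet),
        x = Sum.inl iv ∧ y = Sum.inr je ∧ iv.2 ∈ (je.2 : Sym2 V)) ∨
    (∃ (iv : Fin (n + 1) × V) (je : Fin (t + 1) × G.edgeSet),
        x = Sum.inr je ∧ y = Sum.inl iv ∧ iv.2 ∈ (je.2 : Sym2 V))
  symm := ⟨by
    rintro x y (⟨iv, je, rfl, rfl, h⟩ | ⟨iv, je, rfl, rfl, h⟩)
    · exact Or.inr ⟨iv, je, rfl, rfl, h⟩
    · exact Or.inl ⟨iv, je, rfl, rfl, h⟩⟩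
  loopless := ⟨by
    rintro x (⟨iv, je, h1, h2, _⟩ | ⟨iv, je, h1, h2, _⟩) <;> subst h1 <;> simp_all⟩

open scoped Classical in
/-- The Randić matrix of a graph: entry `1/√(deg u · deg v)` when `u ~ v`, else `0`. -/
def randicMatrix {W : Type} (H : SimpleGraph W) : Matrix W W ℝ :=
  fun u v =>
    if H.Adj u v then
      1 / Real.sqrt ((Nat.card (H.neighborSet u) * Nat.card (H.neighborSet v) : ℕ) : ℝ)
    else 0

/-- `H` has no isolated vertices. -/
def NoIsolated {W : Type} (H : SimpleGraph W) : Prop := ∀ v, ∃ u, H.Adj v u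

/-- The matrix `B` used in the construction of `F₁^m(G)`: all entries `1`
except `B(1,1) = 0` and `B(i, m+1-i) = 0` for `2 ≤ i ≤ m-1` (1-based indexing). -/
def Bmat (m : ℕ) : Matrix (Fin m) (Fin m) ℝ :=
  fun i j =>
    if (i.val = 0 ∧ j.val = 0) ∨ (i.val ≠ 0 ∧ j.val ≠ 0 ∧ i.val + j.val = m - 1) then 0 else 1

lemma Bmat_symm (m : ℕ) (i j : Fin m) : Bmat m i j = Bmat m j i := by
  unfold Bmat
  by_cases h : (i.val = 0 ∧ j.val = 0) ∨ (i.val ≠ 0 ∧ j.val ≠ 0 ∧ i.val + j.val = m - 1)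
  · rw [if_pos h, if_pos (by omega)]
  · rw [if_neg h, if_neg (by omega)]

/-- The graph `F₁^m(G)`: `(i,u) ~ (j,v)` iff `B(i,j) = 1` and `u ~ v` in `G`. -/
def F1Graph {V : Type} (m : ℕ) (G : SimpleGraph V) : SimpleGraph (Fin m × V) where
  Adj x y := Bmat m x.1 y.1 = 1 ∧ G.Adj x.2 y.2
  symm := ⟨by
    rintro x y ⟨hb, ha⟩
    refine ⟨?_, ha.symm⟩
    rw [Bmat_symm]; exact hb⟩
  loopless := ⟨fun x h => G.loopless.irrefl x.2 h.2⟩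

/-- The matrix `H` used in the construction of `F₂^m(G)`: all entries `1`
except `H(i,i) = 0` for `2 ≤ i ≤ m` (1-based indexing). -/
def HmatF2 (m : ℕ) : Matrix (Fin m) (Fin m) ℝ :=
  fun i j => if i.val = j.val ∧ i.val ≠ 0 then 0 else 1

lemma HmatF2_symm (m : ℕ) (i j : Fin m) : HmatF2 m i j = HmatF2 m j i := by
  unfold HmatF2
  by_cases h : i.val = j.val ∧ i.val ≠ 0
  · rw [if_pos h, if_pos (by omega)]
  · rw [if_neg h, if_neg (by omega)]

/-- The graph `F₂^m(G)`: `(i,u) ~ (j,v)` iff `H(i,j) = 1` and `u ~ v` in `G`. -/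
def F2Graph {V : Type} (m : ℕ) (G : SimpleGraph V) : SimpleGraph (Fin m × V) where
  Adj x y := HmatF2 m x.1 y.1 = 1 ∧ G.Adj x.2 y.2
  symm := ⟨by
    rintro x y ⟨hb, ha⟩
    refine ⟨?_, ha.symm⟩
    rw [HmatF2_symm]; exact hb⟩
  loopless := ⟨fun x h => G.loopless.irrefl x.2 h.2⟩

/-- The tensor (Kronecker) product of simple graphs. -/
def tensorGraph {W U : Type} (H : SimpleGraph W) (G : SimpleGraph U) :
    SimpleGraph (W × U) where
  Adj x y := H.Adj x.1 y.1 ∧ G.Adj x.2 y.2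
  symm := ⟨fun _ _ h => ⟨h.1.symm, h.2.symm⟩⟩
  loopless := ⟨fun x h => H.loopless.irrefl x.1 h.1⟩

open Polynomial Kronecker
set_option linter.unusedSectionVars false
set_option linter.unreachableTactic false
set_option linter.unusedTactic false
set_option maxHeartbeats 1000000

section Aux

variable {ι : Type} [Fintype ι] [DecidableEq ι]

lemma charmatrix_eq (M : Matrix ι ι ℝ) : charmatrix M = (X : ℝ[X]) • (1 : Matrix ι ι ℝ[X]) - M.map C := by
  ext i j
  simp [charmatrix_apply, Matrix.smul_apply, Matrix.one_apply, Matrix.diagonal_apply, mul_ite]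

lemma my_charpoly_conj (A D U V : Matrix ι ι ℝ) (hUV : U * V = 1) (hVU : V * U = 1)
    (hA : A = U * D * V) : A.charpoly = D.charpoly := by
  have hm : ∀ M N : Matrix ι ι ℝ, (M * N).map (C : ℝ →+* ℝ[X]) = M.map C * N.map C := by
    intro M N
    simpa [RingHom.mapMatrix_apply] using map_mul (C.mapMatrix : Matrix ι ι ℝ →+* Matrix ι ι ℝ[X]) M N
  have h1 : (U.map (C : ℝ →+* ℝ[X])) * (V.map C) = 1 := by
    rw [← hm, hUV]; simp [RingHom.mapMatrix_apply]
  have h2 : (V.map (C : ℝ →+* ℝ[X])) * (U.map C) = 1 := by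
    rw [← hm, hVU]; simp [RingHom.mapMatrix_apply]
  have key : charmatrix A = (U.map (C : ℝ →+* ℝ[X])) * charmatrix D * (V.map C) := by
    rw [charmatrix_eq, charmatrix_eq, hA, hm, hm]
    rw [Matrix.mul_sub, Matrix.sub_mul]
    congr 1
    rw [Matrix.mul_smul, Matrix.mul_one, Matrix.smul_mul, h1]
  rw [Matrix.charpoly, Matrix.charpoly, key, det_mul, det_mul, mul_comm, ← mul_assoc, ← det_mul, h2, det_one, one_mul]

lemma charpoly_diagonal (d : ι → ℝ) :
    (Matrix.diagonal d).charpoly = ∏ i, (X - C (d i)) := by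
  rw [Matrix.charpoly]
  have : charmatrix (Matrix.diagonal d) = Matrix.diagonal (fun i => X - C (d i)) := by
    ext i j
    by_cases h : i = j
    · subst h; simp [charmatrix_apply_eq]
    · simp [charmatrix_apply_ne _ _ _ h, Matrix.diagonal_apply_ne _ h]
  rw [this, det_diagonal]

lemma charpoly_hermitian (A : Matrix ι ι ℝ) (hA : A.IsHermitian) :
    A.charpoly = ∏ i, (X - C (hA.eigenvalues i)) := by
  have hU := hA.spectral_theorem
  set U : Matrix ι ι ℝ := (hA.eigenvectorUnitary : Matrix ι ι ℝ)
  have hUV : U * star U = 1 := by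
    exact (Matrix.mem_unitaryGroup_iff).mp hA.eigenvectorUnitary.2
  have hVU : star U * U = 1 := by
    exact (Matrix.mem_unitaryGroup_iff').mp hA.eigenvectorUnitary.2
  have hdiag : Matrix.diagonal ((RCLike.ofReal : ℝ → ℝ) ∘ hA.eigenvalues) = Matrix.diagonal hA.eigenvalues := by
    congr 1
  rw [my_charpoly_conj A (Matrix.diagonal hA.eigenvalues) U (star U) hUV hVU (hU.trans (by rw [hdiag, Unitary.conjStarAlgAut_apply])),
    _root_.charpoly_diagonal]


lemma energy_eq_roots (M : Matrix ι ι ℝ) (h : M.IsHermitian) :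
    matEnergy M = (M.charpoly.roots.map (fun r => |r|)).sum := by
  rw [matEnergy, dif_pos h]
  have hroots : M.charpoly.roots = Finset.univ.val.map h.eigenvalues := by
    rw [charpoly_hermitian M h]
    have : ∏ i, (X - C (h.eigenvalues i))
        = ((Finset.univ.val.map h.eigenvalues).map (fun r => X - C r)).prod := by
      rw [Multiset.map_map]; rfl
    rw [this, roots_multiset_prod_X_sub_C]
  rw [hroots, Multiset.map_map]
  rfl

lemma energy_eq_of_charpoly_eq {κ : Type} [Fintype κ] [DecidableEq κ]
    (M₁ : Matrix ι ι ℝ) (M₂ : Matrix κ κ ℝ) (h₁ : M₁.IsHermitian) (h₂ : M₂.IsHermitian)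
    (h : M₁.charpoly = M₂.charpoly) : matEnergy M₁ = matEnergy M₂ := by
  rw [energy_eq_roots M₁ h₁, energy_eq_roots M₂ h₂, h]

lemma mapC_mul {ι κ q : Type} [Fintype κ] (M : Matrix ι κ ℝ) (N : Matrix κ q ℝ) :
    (M * N).map (C : ℝ → ℝ[X]) = M.map C * N.map C := by
  ext i j
  simp [mul_apply, map_apply, map_sum]

lemma mapC_one {ι : Type} [DecidableEq ι] : ((1 : Matrix ι ι ℝ).map (C : ℝ → ℝ[X])) = 1 := by
  ext i j; by_cases h : i = j <;> simp [Matrix.map_apply, Matrix.one_apply, h]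

lemma mapC_smul {ι κ : Type} (c : ℝ) (M : Matrix ι κ ℝ) :
    ((c • M).map (C : ℝ → ℝ[X])) = (C c) • (M.map C) := by
  ext i j; simp [Matrix.map_apply, Matrix.smul_apply]

lemma mapC_kron {ι q : Type} (A : Matrix ι ι ℝ) (B : Matrix q q ℝ) :
    ((A ⊗ₖ B).map (C : ℝ → ℝ[X])) = (A.map C) ⊗ₖ (B.map C) := by
  ext ⟨i, e⟩ ⟨j, f⟩
  simp [Matrix.kroneckerMap_apply, Matrix.map_apply]

def Jmat (m : ℕ) : Matrix (Fin m) (Fin m) ℝ := fun _ _ => 1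
def Pmat (m : ℕ) [NeZero m] : Matrix (Fin m) (Fin m) ℝ :=
  fun i j => if i = 0 then 1 else (if j = i then (1:ℝ) else 0) - (if j = 0 then 1 else 0)
noncomputable def Qmat (m : ℕ) [NeZero m] : Matrix (Fin m) (Fin m) ℝ :=
  fun i j => (if i = j ∧ ¬ i = 0 then (1:ℝ) else 0) + (if j = 0 then (m:ℝ)⁻¹ else -(m:ℝ)⁻¹)
def dvec (m : ℕ) [NeZero m] : Fin m → ℝ := fun i => if i = 0 then (m:ℝ) else 0

lemma Pmat_mul_Qmat (m : ℕ) [NeZero m] : Pmat m * Qmat m = 1 := by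
  have hm : (m : ℝ) ≠ 0 := Nat.cast_ne_zero.mpr (NeZero.ne m)
  ext i j
  rw [mul_apply]
  by_cases hi : i = 0
  · subst hi
    have : ∀ l : Fin m, Pmat m 0 l * Qmat m l j
        = (if l = j then (if j = 0 then (0:ℝ) else 1) else 0) + (if j = 0 then (m:ℝ)⁻¹ else -(m:ℝ)⁻¹) := by
      intro l
      by_cases hl : l = j
      · subst hl
        by_cases h0 : l = 0 <;> simp [Pmat, Qmat, h0]
      · simp [Pmat, Qmat, hl]
    rw [Finset.sum_congr rfl (fun l _ => this l), Finset.sum_add_distrib,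
      Finset.sum_ite_eq' Finset.univ j, Finset.sum_const]
    simp only [Finset.mem_univ, if_true, Finset.card_univ, Fintype.card_fin, nsmul_eq_mul]
    by_cases hj : j = 0 <;> simp [hj, one_apply, hm, eq_comm]
  · have : ∀ l : Fin m, Pmat m i l * Qmat m l j
        = (if l = i then Qmat m l j else 0) - (if l = 0 then Qmat m l j else 0) := by
      intro l; by_cases h1 : l = i <;> by_cases h2 : l = 0 <;> simp [Pmat, hi, h1, h2, sub_mul] <;> simp_all
    rw [Finset.sum_congr rfl (fun l _ => this l), Finset.sum_sub_distrib,
      Finset.sum_ite_eq' Finset.univ i, Finset.sum_ite_eq' Finset.univ (0 : Fin m)]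
    simp only [Finset.mem_univ, if_true]
    have h0 : Qmat m 0 j = (if j = 0 then (m:ℝ)⁻¹ else -(m:ℝ)⁻¹) := by simp [Qmat]
    rw [h0, Qmat]
    by_cases hij : i = j
    · subst hij; simp [hi, one_apply]
    · simp [hij, one_apply, hi]

lemma Pmat_mul_Jmat (m : ℕ) [NeZero m] :
    Pmat m * Jmat m = Matrix.diagonal (dvec m) * Pmat m := by
  ext i j
  rw [mul_apply, diagonal_mul]
  by_cases hi : i = 0
  · subst hi
    simp [Pmat, Jmat, dvec, Finset.card_univ]
  · have : ∀ l : Fin m, Pmat m i l * Jmat m l j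
        = (if l = i then (1:ℝ) else 0) - (if l = 0 then (1:ℝ) else 0) := by
      intro l; simp [Pmat, Jmat, hi]
    rw [Finset.sum_congr rfl (fun l _ => this l), Finset.sum_sub_distrib,
      Finset.sum_ite_eq' Finset.univ i, Finset.sum_ite_eq' Finset.univ (0 : Fin m)]
    simp [dvec, hi]

lemma Pmat_mul_Jmat_mul_Qmat (m : ℕ) [NeZero m] :
    Pmat m * Jmat m * Qmat m = Matrix.diagonal (dvec m) := by
  rw [Pmat_mul_Jmat, Matrix.mul_assoc, Pmat_mul_Qmat, Matrix.mul_one]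

lemma det_smul_one_sub_kron (m : ℕ) (hm : 0 < m) {q : Type} [Fintype q] [DecidableEq q]
    (W : Matrix q q ℝ) :
    ((X ^ 2 : ℝ[X]) • (1 : Matrix (Fin m × q) (Fin m × q) ℝ[X])
        - (((2 * m : ℝ)⁻¹) • (Jmat m ⊗ₖ W)).map C).det
      = X ^ (2 * Fintype.card q * (m - 1))
        * ((X ^ 2 : ℝ[X]) • (1 : Matrix q q ℝ[X]) - (((2 : ℝ)⁻¹) • W).map C).det := by
  haveI : NeZero m := ⟨hm.ne'⟩
  have hmR : (m : ℝ) ≠ 0 := Nat.cast_ne_zero.mpr hm.ne'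
  set c : ℝ := (2 * m : ℝ)⁻¹ with hc
  set P' : Matrix (Fin m × q) (Fin m × q) ℝ[X] := ((Pmat m).map C) ⊗ₖ (1 : Matrix q q ℝ[X]) with hP'
  set Q' : Matrix (Fin m × q) (Fin m × q) ℝ[X] := ((Qmat m).map C) ⊗ₖ (1 : Matrix q q ℝ[X]) with hQ'
  set A : Matrix (Fin m × q) (Fin m × q) ℝ[X] :=
    (X ^ 2 : ℝ[X]) • (1 : Matrix (Fin m × q) (Fin m × q) ℝ[X]) - (c • (Jmat m ⊗ₖ W)).map C with hA
  have hPQ : P' * Q' = 1 := by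
    rw [hP', hQ', ← Matrix.mul_kronecker_mul, ← mapC_mul, Pmat_mul_Qmat, mapC_one,
      Matrix.one_mul, Matrix.one_kronecker_one]
  have hQP : Qmat m * Pmat m = 1 := mul_eq_one_comm.mp (Pmat_mul_Qmat m)
  have hdet1 : P'.det * Q'.det = 1 := by rw [← det_mul, hPQ, det_one]
  have hmid : P' * ((Jmat m).map (C : ℝ → ℝ[X]) ⊗ₖ W.map C) * Q'
      = ((Matrix.diagonal (dvec m)).map (C : ℝ → ℝ[X])) ⊗ₖ (W.map C) := by
    rw [hP', hQ', ← Matrix.mul_kronecker_mul, ← Matrix.mul_kronecker_mul, ← mapC_mul, ← mapC_mul,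
      Pmat_mul_Jmat_mul_Qmat, Matrix.one_mul, Matrix.mul_one]
  have hconj : P' * A * Q'
      = (X ^ 2 : ℝ[X]) • (1 : Matrix (Fin m × q) (Fin m × q) ℝ[X])
        - (C c) • (((Matrix.diagonal (dvec m)).map (C : ℝ → ℝ[X])) ⊗ₖ (W.map C)) := by
    rw [hA, Matrix.mul_sub, Matrix.sub_mul]
    refine congrArg₂ (· - ·) ?_ ?_
    · rw [Matrix.mul_smul, Matrix.mul_one, Matrix.smul_mul, hPQ]
    · rw [mapC_smul, mapC_kron, Matrix.mul_smul, Matrix.smul_mul, hmid]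
  have hdetA : A.det = (P' * A * Q').det := by
    rw [det_mul, det_mul, mul_right_comm, hdet1, one_mul]
  rw [hdetA, hconj]
  set σ : q × Fin m ≃ Fin m × q := Equiv.prodComm q (Fin m) with hσ
  set g : Fin m → Matrix q q ℝ[X] :=
    fun i => (X ^ 2 : ℝ[X]) • (1 : Matrix q q ℝ[X]) - (C c * C (dvec m i)) • (W.map C) with hg
  have hblock : ((X ^ 2 : ℝ[X]) • (1 : Matrix (Fin m × q) (Fin m × q) ℝ[X])
        - (C c) • (((Matrix.diagonal (dvec m)).map (C : ℝ → ℝ[X])) ⊗ₖ (W.map C))).submatrix σ σ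
      = Matrix.blockDiagonal g := by
    ext ⟨e, i⟩ ⟨f, j⟩
    by_cases h : i = j
    · subst h
      by_cases he : e = f
      · subst he
        simp [hσ, hg, Matrix.blockDiagonal_apply, Matrix.kroneckerMap_apply, Matrix.one_apply,
          Matrix.diagonal_apply, Matrix.map_apply, Matrix.smul_apply, mul_assoc]
      · simp [hσ, hg, Matrix.blockDiagonal_apply, Matrix.kroneckerMap_apply, Matrix.one_apply,
          Matrix.diagonal_apply, Matrix.map_apply, Matrix.smul_apply, he, Prod.ext_iff, mul_assoc]
    · simp [hσ, hg, Matrix.blockDiagonal_apply, Matrix.kroneckerMap_apply, Matrix.one_apply,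
        Matrix.diagonal_apply, Matrix.map_apply, Matrix.smul_apply, h, Prod.ext_iff]
  rw [← Matrix.det_submatrix_equiv_self σ, hblock, Matrix.det_blockDiagonal]
  have hc0 : C c * C ((dvec m) 0) = C ((2 : ℝ)⁻¹) := by
    rw [← _root_.map_mul]
    congr 1
    simp only [dvec, if_pos rfl, hc, ↓reduceIte]
    field_simp
  have h0 : g 0 = (X ^ 2 : ℝ[X]) • (1 : Matrix q q ℝ[X]) - (((2 : ℝ)⁻¹) • W).map C := by
    show (X ^ 2 : ℝ[X]) • (1 : Matrix q q ℝ[X]) - (C c * C (dvec m 0)) • (W.map C) = _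
    rw [mapC_smul, hc0]
  have hne : ∀ i ∈ Finset.univ.erase (0 : Fin m), (g i).det = (X ^ 2 : ℝ[X]) ^ Fintype.card q := by
    intro i hi
    have hi0 : i ≠ 0 := (Finset.mem_erase.mp hi).1
    have hgi : g i = (X ^ 2 : ℝ[X]) • (1 : Matrix q q ℝ[X]) := by
      show (X ^ 2 : ℝ[X]) • (1 : Matrix q q ℝ[X]) - (C c * C (dvec m i)) • (W.map C) = _
      simp [dvec, hi0]
    rw [hgi, Matrix.det_smul, det_one, mul_one]
  rw [← Finset.mul_prod_erase Finset.univ _ (Finset.mem_univ (0 : Fin m)),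
    Finset.prod_congr rfl hne, Finset.prod_const, h0]
  have hcard : (Finset.univ.erase (0 : Fin m)).card = m - 1 := by
    rw [Finset.card_erase_of_mem (Finset.mem_univ _), Finset.card_univ, Fintype.card_fin]
  rw [hcard, ← pow_mul]
  ring


lemma charpoly_key {α q : Type} [Fintype α] [DecidableEq α] [Fintype q] [DecidableEq q]
    (m : ℕ) (hm : 0 < m) (B : Matrix α (Fin m × q) ℝ) (W : Matrix q q ℝ)
    (hB : Bᵀ * B = ((2 * m : ℝ)⁻¹) • (Jmat m ⊗ₖ W)) :
    (Matrix.fromBlocks 0 B Bᵀ 0).charpoly * X ^ (Fintype.card α + m * Fintype.card q)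
      = X ^ (2 * Fintype.card α + 2 * Fintype.card q * (m - 1))
        * ((X ^ 2 : ℝ[X]) • (1 : Matrix q q ℝ[X]) - (((2 : ℝ)⁻¹) • W).map C).det := by
  set M : Matrix (α ⊕ (Fin m × q)) (α ⊕ (Fin m × q)) ℝ := Matrix.fromBlocks 0 B Bᵀ 0 with hM
  have hchar : charmatrix M = Matrix.fromBlocks ((X : ℝ[X]) • 1) (-(B.map C))
      (-(Bᵀ.map C)) ((X : ℝ[X]) • 1) := by
    ext i j
    cases i <;> cases j <;>
      simp [hM, charmatrix_apply, Matrix.fromBlocks, Matrix.diagonal_apply, Matrix.one_apply,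
        Matrix.smul_apply, Matrix.map_apply, Matrix.transpose_apply] <;>
      aesop
  set U : Matrix (α ⊕ (Fin m × q)) (α ⊕ (Fin m × q)) ℝ[X] :=
    Matrix.fromBlocks ((X : ℝ[X]) • 1) (B.map C) 0 ((X : ℝ[X]) • 1) with hU
  have hdetU : U.det = X ^ (Fintype.card α + m * Fintype.card q) := by
    rw [hU, Matrix.det_fromBlocks_zero₂₁, Matrix.det_smul, Matrix.det_smul, det_one, det_one,
      mul_one, mul_one, ← pow_add, Fintype.card_prod, Fintype.card_fin]
  have hprod : charmatrix M * U
      = Matrix.fromBlocks ((X ^ 2 : ℝ[X]) • 1) 0 (-((X : ℝ[X]) • (Bᵀ.map C)))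
        ((X ^ 2 : ℝ[X]) • 1 - (Bᵀ.map C) * (B.map C)) := by
    rw [hchar, hU, Matrix.fromBlocks_multiply]
    refine Matrix.fromBlocks_inj.mpr ⟨?_, ?_, ?_, ?_⟩
    · rw [Matrix.smul_mul, Matrix.mul_smul, Matrix.one_mul, smul_smul, ← pow_two,
        Matrix.mul_zero, add_zero]
    · rw [Matrix.smul_mul, Matrix.one_mul, Matrix.neg_mul, Matrix.mul_smul, Matrix.mul_one]
      exact add_neg_cancel _
    · rw [Matrix.mul_zero, add_zero, Matrix.neg_mul, Matrix.mul_smul, Matrix.mul_one]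
    · rw [Matrix.neg_mul, Matrix.smul_mul, Matrix.mul_smul, Matrix.one_mul, smul_smul, ← pow_two]
      exact neg_add_eq_sub _ _
  have hBB : (Bᵀ.map (C : ℝ → ℝ[X])) * (B.map C) = (((2 * m : ℝ)⁻¹) • (Jmat m ⊗ₖ W)).map C := by
    rw [← mapC_mul, hB]
  calc M.charpoly * X ^ (Fintype.card α + m * Fintype.card q)
      = (charmatrix M).det * U.det := by rw [Matrix.charpoly, hdetU]
    _ = (charmatrix M * U).det := (det_mul _ _).symm
    _ = ((X ^ 2 : ℝ[X]) • (1 : Matrix α α ℝ[X])).det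
        * ((X ^ 2 : ℝ[X]) • (1 : Matrix (Fin m × q) (Fin m × q) ℝ[X])
            - (((2 * m : ℝ)⁻¹) • (Jmat m ⊗ₖ W)).map C).det := by
        rw [hprod, Matrix.det_fromBlocks_zero₁₂, hBB]
    _ = X ^ (2 * Fintype.card α) * (X ^ (2 * Fintype.card q * (m - 1))
        * ((X ^ 2 : ℝ[X]) • (1 : Matrix q q ℝ[X]) - (((2 : ℝ)⁻¹) • W).map C).det) := by
        rw [det_smul_one_sub_kron m hm W, Matrix.det_smul, det_one, mul_one, ← pow_mul, mul_comm 2]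
    _ = _ := by ring


end Aux

section Graphs

variable {V : Type} [Fintype V] [DecidableEq V] (G : SimpleGraph V) [DecidableRel G.Adj]

-- adjacency characterizations
lemma SGk_adj_inl_inr (k : ℕ) (v : V) (ie : Fin k × G.edgeSet) :
    (SGkGraph G k).Adj (Sum.inl v) (Sum.inr ie) ↔ v ∈ (ie.2 : Sym2 V) := by
  constructor
  · rintro (⟨w, je, h1, h2, h⟩ | ⟨w, je, h1, h2, h⟩) <;> simp_all
  · intro h; exact Or.inl ⟨v, ie, rfl, rfl, h⟩

lemma SGk_adj_inr_inl (k : ℕ) (v : V) (ie : Fin k × G.edgeSet) :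
    (SGkGraph G k).Adj (Sum.inr ie) (Sum.inl v) ↔ v ∈ (ie.2 : Sym2 V) := by
  rw [SimpleGraph.adj_comm]; exact SGk_adj_inl_inr G k v ie

lemma SGk_adj_inl_inl (k : ℕ) (v w : V) :
    ¬ (SGkGraph G k).Adj (Sum.inl v) (Sum.inl w) := by
  rintro (⟨a, b, h1, h2, h⟩ | ⟨a, b, h1, h2, h⟩) <;> simp_all

lemma SGk_adj_inr_inr (k : ℕ) (ie je : Fin k × G.edgeSet) :
    ¬ (SGkGraph G k).Adj (Sum.inr ie) (Sum.inr je) := by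
  rintro (⟨a, b, h1, h2, h⟩ | ⟨a, b, h1, h2, h⟩) <;> simp_all

lemma SGtn_adj_inl_inr (n t : ℕ) (iv : Fin (n+1) × V) (je : Fin (t+1) × G.edgeSet) :
    (SGtnGraph G n t).Adj (Sum.inl iv) (Sum.inr je) ↔ iv.2 ∈ (je.2 : Sym2 V) := by
  constructor
  · rintro (⟨a, b, h1, h2, h⟩ | ⟨a, b, h1, h2, h⟩) <;> simp_all
  · intro h; exact Or.inl ⟨iv, je, rfl, rfl, h⟩

lemma SGtn_adj_inr_inl (n t : ℕ) (iv : Fin (n+1) × V) (je : Fin (t+1) × G.edgeSet) :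
    (SGtnGraph G n t).Adj (Sum.inr je) (Sum.inl iv) ↔ iv.2 ∈ (je.2 : Sym2 V) := by
  rw [SimpleGraph.adj_comm]; exact SGtn_adj_inl_inr G n t iv je

lemma SGtn_adj_inl_inl (n t : ℕ) (iv jv : Fin (n+1) × V) :
    ¬ (SGtnGraph G n t).Adj (Sum.inl iv) (Sum.inl jv) := by
  rintro (⟨a, b, h1, h2, h⟩ | ⟨a, b, h1, h2, h⟩) <;> simp_all

lemma SGtn_adj_inr_inr (n t : ℕ) (ie je : Fin (t+1) × G.edgeSet) :
    ¬ (SGtnGraph G n t).Adj (Sum.inr ie) (Sum.inr je) := by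
  rintro (⟨a, b, h1, h2, h⟩ | ⟨a, b, h1, h2, h⟩) <;> simp_all

-- cardinality helpers
def prodSubtypeEquiv {α β : Type} (p : β → Prop) : {x : α × β // p x.2} ≃ α × {b : β // p b} where
  toFun x := (x.1.1, ⟨x.1.2, x.2⟩)
  invFun y := ⟨(y.1, y.2.1), y.2.2⟩
  left_inv _ := rfl
  right_inv _ := rfl

lemma natcard_mem_edge (e : G.edgeSet) : Nat.card {v : V // v ∈ (e : Sym2 V)} = 2 := by
  obtain ⟨e, he⟩ := e
  induction e with
  | _ a b =>
    have hab : G.Adj a b := he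
    have hset : {v : V | v ∈ (s(a, b) : Sym2 V)} = {a, b} := by
      ext v; simp [Sym2.mem_iff]
    calc Nat.card {v : V // v ∈ ((⟨s(a,b), he⟩ : G.edgeSet) : Sym2 V)}
        = Set.ncard {v : V | v ∈ (s(a, b) : Sym2 V)} := (Nat.card_coe_set_eq _)
      _ = 2 := by rw [hset]; exact Set.ncard_pair (G.ne_of_adj hab)

lemma natcard_incidence (v : V) :
    Nat.card {e : G.edgeSet // v ∈ (e : Sym2 V)} = G.degree v := by
  have e1 : {e : G.edgeSet // v ∈ (e : Sym2 V)} ≃ G.incidenceSet v :=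
    (Equiv.subtypeSubtypeEquivSubtypeInter (· ∈ G.edgeSet) (v ∈ ·)).trans
      (Equiv.setCongr rfl)
  rw [Nat.card_congr (e1.trans (G.incidenceSetEquivNeighborSet v)), Nat.card_eq_fintype_card,
    SimpleGraph.card_neighborSet_eq_degree]

lemma natcard_SGk_inl (k : ℕ) (v : V) :
    Nat.card ((SGkGraph G k).neighborSet (Sum.inl v)) = k * G.degree v := by
  have hset : (SGkGraph G k).neighborSet (Sum.inl v)
      = Sum.inr '' {ie : Fin k × G.edgeSet | v ∈ (ie.2 : Sym2 V)} := by
    ext x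
    cases x with
    | inl w => simp [SimpleGraph.mem_neighborSet, SGk_adj_inl_inl]
    | inr ie => simp [SimpleGraph.mem_neighborSet, SGk_adj_inl_inr]
  rw [Nat.card_coe_set_eq, hset, Set.ncard_image_of_injective _ Sum.inr_injective,
    ← Nat.card_coe_set_eq]
  show Nat.card {ie : Fin k × G.edgeSet // v ∈ (ie.2 : Sym2 V)} = _
  rw [Nat.card_congr (prodSubtypeEquiv (α := Fin k) (fun e : G.edgeSet => v ∈ (e : Sym2 V))), Nat.card_prod, Nat.card_eq_fintype_card,
    Fintype.card_fin, natcard_incidence]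

lemma natcard_SGk_inr (k : ℕ) (ie : Fin k × G.edgeSet) :
    Nat.card ((SGkGraph G k).neighborSet (Sum.inr ie)) = 2 := by
  have hset : (SGkGraph G k).neighborSet (Sum.inr ie)
      = Sum.inl '' {v : V | v ∈ (ie.2 : Sym2 V)} := by
    ext x
    cases x with
    | inl w => simp [SimpleGraph.mem_neighborSet, SGk_adj_inr_inl]
    | inr je => simp [SimpleGraph.mem_neighborSet, SGk_adj_inr_inr]
  rw [Nat.card_coe_set_eq, hset, Set.ncard_image_of_injective _ Sum.inl_injective,
    ← Nat.card_coe_set_eq]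
  exact natcard_mem_edge G ie.2

lemma natcard_SGtn_inl (n t : ℕ) (iv : Fin (n+1) × V) :
    Nat.card ((SGtnGraph G n t).neighborSet (Sum.inl iv)) = (t + 1) * G.degree iv.2 := by
  have hset : (SGtnGraph G n t).neighborSet (Sum.inl iv)
      = Sum.inr '' {je : Fin (t+1) × G.edgeSet | iv.2 ∈ (je.2 : Sym2 V)} := by
    ext x
    cases x with
    | inl w => simp [SimpleGraph.mem_neighborSet, SGtn_adj_inl_inl]
    | inr je => simp [SimpleGraph.mem_neighborSet, SGtn_adj_inl_inr]
  rw [Nat.card_coe_set_eq, hset, Set.ncard_image_of_injective _ Sum.inr_injective,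
    ← Nat.card_coe_set_eq]
  show Nat.card {je : Fin (t+1) × G.edgeSet // iv.2 ∈ (je.2 : Sym2 V)} = _
  rw [Nat.card_congr (prodSubtypeEquiv (α := Fin (t+1)) (fun e : G.edgeSet => iv.2 ∈ (e : Sym2 V))), Nat.card_prod, Nat.card_eq_fintype_card,
    Fintype.card_fin, natcard_incidence]

lemma natcard_SGtn_inr (n t : ℕ) (je : Fin (t+1) × G.edgeSet) :
    Nat.card ((SGtnGraph G n t).neighborSet (Sum.inr je)) = (n + 1) * 2 := by
  have hset : (SGtnGraph G n t).neighborSet (Sum.inr je)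
      = Sum.inl '' {iv : Fin (n+1) × V | iv.2 ∈ (je.2 : Sym2 V)} := by
    ext x
    cases x with
    | inl iv => simp [SimpleGraph.mem_neighborSet, SGtn_adj_inr_inl]
    | inr ke => simp [SimpleGraph.mem_neighborSet, SGtn_adj_inr_inr]
  rw [Nat.card_coe_set_eq, hset, Set.ncard_image_of_injective _ Sum.inl_injective,
    ← Nat.card_coe_set_eq]
  show Nat.card {iv : Fin (n+1) × V // iv.2 ∈ (je.2 : Sym2 V)} = _
  rw [Nat.card_congr (prodSubtypeEquiv (α := Fin (n+1)) (fun w : V => w ∈ (je.2 : Sym2 V))), Nat.card_prod, Nat.card_eq_fintype_card,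
    Fintype.card_fin, natcard_mem_edge]

lemma randic_isHermitian {W : Type} (H : SimpleGraph W) : (randicMatrix H).IsHermitian := by
  ext i j
  simp only [Matrix.conjTranspose_apply, randicMatrix, star_trivial]
  by_cases h : H.Adj j i
  · rw [if_pos h, if_pos (h.symm), Nat.mul_comm]
  · rw [if_neg h, if_neg (fun hc => h hc.symm)]

def Bk (k : ℕ) : Matrix V (Fin k × G.edgeSet) ℝ :=
  fun v ie => if v ∈ (ie.2 : Sym2 V) then (Real.sqrt ((k * G.degree v * 2 : ℕ) : ℝ))⁻¹ else 0

def Btn (n t : ℕ) : Matrix (Fin (n+1) × V) (Fin (t+1) × G.edgeSet) ℝ :=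
  fun iv je => if iv.2 ∈ (je.2 : Sym2 V) then
    (Real.sqrt (((t + 1) * G.degree iv.2 * ((n + 1) * 2) : ℕ) : ℝ))⁻¹ else 0

def Wmat : Matrix G.edgeSet G.edgeSet ℝ :=
  fun e f => ∑ v : V, (if v ∈ (e : Sym2 V) ∧ v ∈ (f : Sym2 V) then ((G.degree v : ℝ))⁻¹ else 0)


lemma randic_SGk_eq (k : ℕ) :
    randicMatrix (SGkGraph G k) = Matrix.fromBlocks 0 (Bk G k) (Bk G k)ᵀ 0 := by
  ext x y
  cases x with
  | inl v =>
    cases y with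
    | inl w =>
      rw [randicMatrix, if_neg (SGk_adj_inl_inl G k v w)]; rfl
    | inr ie =>
      rw [randicMatrix]
      by_cases h : v ∈ (ie.2 : Sym2 V)
      · rw [if_pos ((SGk_adj_inl_inr G k v ie).mpr h)]
        show _ = Bk G k v ie
        rw [Bk, if_pos h, natcard_SGk_inl, natcard_SGk_inr, one_div]
      · rw [if_neg (fun hc => h ((SGk_adj_inl_inr G k v ie).mp hc))]
        show (0 : ℝ) = Bk G k v ie
        rw [Bk, if_neg h]
  | inr ie =>
    cases y with
    | inl v =>
      rw [randicMatrix]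
      by_cases h : v ∈ (ie.2 : Sym2 V)
      · rw [if_pos ((SGk_adj_inr_inl G k v ie).mpr h)]
        show _ = (Bk G k)ᵀ ie v
        rw [Matrix.transpose_apply, Bk, if_pos h, natcard_SGk_inl, natcard_SGk_inr, one_div]
        congr 2
        push_cast
        ring
      · rw [if_neg (fun hc => h ((SGk_adj_inr_inl G k v ie).mp hc))]
        show (0 : ℝ) = (Bk G k)ᵀ ie v
        rw [Matrix.transpose_apply, Bk, if_neg h]
    | inr je =>
      rw [randicMatrix, if_neg (SGk_adj_inr_inr G k ie je)]; rfl

lemma randic_SGtn_eq (n t : ℕ) :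
    randicMatrix (SGtnGraph G n t) = Matrix.fromBlocks 0 (Btn G n t) (Btn G n t)ᵀ 0 := by
  ext x y
  cases x with
  | inl iv =>
    cases y with
    | inl jv =>
      rw [randicMatrix, if_neg (SGtn_adj_inl_inl G n t iv jv)]; rfl
    | inr je =>
      rw [randicMatrix]
      by_cases h : iv.2 ∈ (je.2 : Sym2 V)
      · rw [if_pos ((SGtn_adj_inl_inr G n t iv je).mpr h)]
        show _ = Btn G n t iv je
        rw [Btn, if_pos h, natcard_SGtn_inl, natcard_SGtn_inr, one_div]
      · rw [if_neg (fun hc => h ((SGtn_adj_inl_inr G n t iv je).mp hc))]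
        show (0 : ℝ) = Btn G n t iv je
        rw [Btn, if_neg h]
  | inr je =>
    cases y with
    | inl iv =>
      rw [randicMatrix]
      by_cases h : iv.2 ∈ (je.2 : Sym2 V)
      · rw [if_pos ((SGtn_adj_inr_inl G n t iv je).mpr h)]
        show _ = (Btn G n t)ᵀ je iv
        rw [Matrix.transpose_apply, Btn, if_pos h, natcard_SGtn_inl, natcard_SGtn_inr, one_div]
        congr 2
        push_cast
        ring
      · rw [if_neg (fun hc => h ((SGtn_adj_inr_inl G n t iv je).mp hc))]
        show (0 : ℝ) = (Btn G n t)ᵀ je iv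
        rw [Matrix.transpose_apply, Btn, if_neg h]
    | inr ke =>
      rw [randicMatrix, if_neg (SGtn_adj_inr_inr G n t je ke)]; rfl

lemma degree_pos (hiso : NoIsolated G) (v : V) : 0 < G.degree v := by
  obtain ⟨u, hu⟩ := hiso v
  exact (G.degree_pos_iff_exists_adj v).mpr ⟨u, hu⟩

lemma sqrt_inv_mul_self (x : ℕ) (hx : 0 < x) :
    (Real.sqrt (x : ℝ))⁻¹ * (Real.sqrt (x : ℝ))⁻¹ = ((x : ℝ))⁻¹ := by
  rw [← mul_inv, Real.mul_self_sqrt (by positivity)]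

lemma Bk_tmul (hiso : NoIsolated G) (k : ℕ) (hk : 0 < k) :
    (Bk G k)ᵀ * Bk G k = ((2 * (k : ℝ))⁻¹) • (Jmat k ⊗ₖ Wmat G) := by
  ext ⟨i, e⟩ ⟨j, f⟩
  rw [Matrix.mul_apply]
  have hterm : ∀ v : V, (Bk G k)ᵀ (i, e) v * Bk G k v (j, f)
      = (if v ∈ (e : Sym2 V) ∧ v ∈ (f : Sym2 V) then
          (((k * G.degree v * 2 : ℕ) : ℝ))⁻¹ else 0) := by
    intro v
    simp only [Matrix.transpose_apply, Bk]
    by_cases h1 : v ∈ (e : Sym2 V) <;> by_cases h2 : v ∈ (f : Sym2 V) <;>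
      simp only [h1, h2, if_true, if_false, and_true, and_false, true_and, mul_zero, zero_mul]
    exact sqrt_inv_mul_self _ (Nat.mul_pos (Nat.mul_pos hk (degree_pos G hiso v)) two_pos)
  rw [Finset.sum_congr rfl (fun v _ => hterm v)]
  simp only [Matrix.smul_apply, Matrix.kroneckerMap_apply, Jmat, one_mul, smul_eq_mul, Wmat]
  rw [Finset.mul_sum]
  apply Finset.sum_congr rfl
  intro v _
  have hdeg : (0 : ℝ) < (G.degree v : ℝ) := by exact_mod_cast degree_pos G hiso v
  have hkR : (0 : ℝ) < (k : ℝ) := by exact_mod_cast hk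
  by_cases h : v ∈ (e : Sym2 V) ∧ v ∈ (f : Sym2 V)
  · rw [if_pos h, if_pos h]
    push_cast
    field_simp
  · rw [if_neg h, if_neg h, mul_zero]

lemma Btn_tmul (hiso : NoIsolated G) (n t : ℕ) :
    (Btn G n t)ᵀ * Btn G n t = ((2 * ((t : ℝ) + 1))⁻¹) • (Jmat (t+1) ⊗ₖ Wmat G) := by
  ext ⟨j, e⟩ ⟨j', f⟩
  rw [Matrix.mul_apply]
  have hterm : ∀ x : Fin (n+1) × V, (Btn G n t)ᵀ (j, e) x * Btn G n t x (j', f)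
      = (fun v : V => if v ∈ (e : Sym2 V) ∧ v ∈ (f : Sym2 V) then
          ((((t + 1) * G.degree v * ((n + 1) * 2) : ℕ) : ℝ))⁻¹ else 0) x.2 := by
    rintro ⟨i, v⟩
    simp only [Matrix.transpose_apply, Btn]
    by_cases h1 : v ∈ (e : Sym2 V) <;> by_cases h2 : v ∈ (f : Sym2 V) <;>
      simp only [h1, h2, if_true, if_false, and_true, and_false, true_and, mul_zero, zero_mul]
    exact sqrt_inv_mul_self _
      (Nat.mul_pos (Nat.mul_pos (Nat.succ_pos t) (degree_pos G hiso v))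
        (Nat.mul_pos (Nat.succ_pos n) two_pos))
  rw [Finset.sum_congr rfl (fun x _ => hterm x), Fintype.sum_prod_type]
  dsimp only
  simp only [Finset.sum_const, Finset.card_univ, Fintype.card_fin, nsmul_eq_mul]
  simp only [Matrix.smul_apply, Matrix.kroneckerMap_apply, Jmat, one_mul, smul_eq_mul, Wmat]
  rw [Finset.mul_sum, Finset.mul_sum]
  apply Finset.sum_congr rfl
  intro v _
  have hdeg : (0 : ℝ) < (G.degree v : ℝ) := by exact_mod_cast degree_pos G hiso v
  by_cases h : v ∈ (e : Sym2 V) ∧ v ∈ (f : Sym2 V)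
  · rw [if_pos h, if_pos h]
    push_cast
    field_simp
  · rw [if_neg h, if_neg h, mul_zero, mul_zero]


end Graphs

/-- if `S(G)_k` and `S(G)_t^n` have the same number of vertices
(`p + kq = (n+1)p + (t+1)q`), then they are Randić equienergetic. -/
theorem stmt_12 (V : Type) [Fintype V] [DecidableEq V] (G : SimpleGraph V) [DecidableRel G.Adj]
    (hiso : NoIsolated G) (n t k : ℕ) (hn : 1 ≤ n) (ht : t = n ∨ t = n - 1) (hk : 0 < k)
    (horder : Fintype.card V + k * Fintype.card G.edgeSet =
      (n + 1) * Fintype.card V + (t + 1) * Fintype.card G.edgeSet) :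
    matEnergy (randicMatrix (SGkGraph G k)) = matEnergy (randicMatrix (SGtnGraph G n t)) := by
  classical
  apply energy_eq_of_charpoly_eq _ _ (randic_isHermitian _) (randic_isHermitian _)
  rw [randic_SGk_eq, randic_SGtn_eq]
  have key1 := charpoly_key k hk (Bk G k) (Wmat G) (Bk_tmul G hiso k hk)
  have key2 := charpoly_key (t + 1) (Nat.succ_pos t) (Btn G n t) (Wmat G) (by
    rw [Btn_tmul G hiso n t]
    norm_cast)
  simp only [Fintype.card_prod, Fintype.card_fin] at key1 key2
  set p := Fintype.card V with hp
  set q := Fintype.card G.edgeSet with hq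
  have hS : p + k * q = (n + 1) * p + (t + 1) * q := horder
  obtain ⟨k', rfl⟩ : ∃ k', k = k' + 1 := ⟨k - 1, by omega⟩
  have hexp : 2 * p + 2 * q * (k' + 1 - 1) = 2 * ((n + 1) * p) + 2 * q * (t + 1 - 1) := by
    simp only [Nat.add_sub_cancel]
    have hS2 : p + (k' + 1) * q = (n + 1) * p + (t + 1) * q := hS
    ring_nf at hS2 ⊢
    omega
  rw [hS, hexp, ← key2] at key1
  exact mul_right_cancel₀ (pow_ne_zero _ Polynomial.X_ne_zero) key1


end
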